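/- Under the assumptions of the outer-approximation certificate (L v ≤ 0 on [0,T] × X and v(T,·) ≥ 0 on X_T), if in addition w : ℝⁿ → ℝ satisfies w(x) ≥ v(0,x) + 1 for all x ∈ X, then w(x₀) ≥ 1 for every x₀ in the region of attraction X₀. -/

import Mathlib

/-! The value of `v` along a trajectory, `t ↦ v (t, x t)`, has derivative `L v = ∂ₜv + ∇ₓv · f`
evaluated on the trajectory, which is nonpositive while the trajectory stays in `X`. Hence
`v (0, x₀) ≥ v (T, x T) ≥ 0`, and `w x₀ ≥ v (0, x₀) + 1 ≥ 1`. -/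

open Set

section

variable {E : Type*} [NormedAddCommGroup E] [NormedSpace ℝ E] {V : ℝ × E → ℝ}

theorem hasDerivAt_comp_graph {x : ℝ → E} {x' : E} {t : ℝ}
    (hV : DifferentiableAt ℝ V (t, x t)) (hx : HasDerivAt x x' t) :
    HasDerivAt (fun s => V (s, x s)) (fderiv ℝ V (t, x t) (1, x')) t :=
  hV.hasFDerivAt.comp_hasDerivAt t ((hasDerivAt_id t).prodMk hx)

theorem antitoneOn_comp_graph_of_fderiv_nonpos (hV : Differentiable ℝ V)
    {x x' : ℝ → E} {a b : ℝ} (hx : ∀ t ∈ Icc a b, HasDerivAt x (x' t) t)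
    (hL : ∀ t ∈ Icc a b, fderiv ℝ V (t, x t) (1, x' t) ≤ 0) :
    AntitoneOn (fun t => V (t, x t)) (Icc a b) := by
  have hderiv : ∀ t ∈ Icc a b,
      HasDerivAt (fun s => V (s, x s)) (fderiv ℝ V (t, x t) (1, x' t)) t :=
    fun t ht => hasDerivAt_comp_graph (hV _) (hx t ht)
  refine antitoneOn_of_deriv_nonpos (convex_Icc a b)
    (fun t ht => (hderiv t ht).continuousAt.continuousWithinAt) ?_ ?_
  · rw [interior_Icc]
    exact fun t ht => (hderiv t (Ioo_subset_Icc_self ht)).differentiableAt.differentiableWithinAt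
  · rw [interior_Icc]
    intro t ht
    rw [(hderiv t (Ioo_subset_Icc_self ht)).deriv]
    exact hL t (Ioo_subset_Icc_self ht)

end

theorem stmt_6_general {n : ℕ} (f : (Fin n → ℝ) → (Fin n → ℝ))
    (X XT : Set (Fin n → ℝ)) (T : ℝ) (hT : 0 < T)
    (v : ℝ → (Fin n → ℝ) → ℝ)
    (hv : ContDiff ℝ 1 (Function.uncurry v))
    (hdecr : ∀ t ∈ Set.Icc (0 : ℝ) T, ∀ y ∈ X,
      fderiv ℝ (Function.uncurry v) (t, y) (1, f y) ≤ 0)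
    (hvT : ∀ y ∈ XT, 0 ≤ v T y)
    (w : (Fin n → ℝ) → ℝ)
    (hw : ∀ y ∈ X, v 0 y + 1 ≤ w y)
    (x₀ : Fin n → ℝ)
    (hx₀ : x₀ ∈ X ∧ ∃ x : ℝ → (Fin n → ℝ),
      (∀ t ∈ Set.Icc (0 : ℝ) T, HasDerivAt x (f (x t)) t) ∧
      x 0 = x₀ ∧ (∀ t ∈ Set.Icc (0 : ℝ) T, x t ∈ X) ∧ x T ∈ XT) :
    1 ≤ w x₀ := by
  obtain ⟨hx₀X, x, hx, rfl, hxX, hxT⟩ := hx₀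
  have hanti : AntitoneOn (fun t => Function.uncurry v (t, x t)) (Icc 0 T) :=
    antitoneOn_comp_graph_of_fderiv_nonpos (hv.differentiable one_ne_zero) hx
      fun t ht => hdecr t ht (x t) (hxX t ht)
  have hvT_le_v0 : v T (x T) ≤ v 0 (x 0) :=
    hanti (left_mem_Icc.2 hT.le) (right_mem_Icc.2 hT.le) hT.le
  linarith [hvT (x T) hxT, hw (x 0) hx₀X]

theorem stmt_6 {n : ℕ} (f : (Fin n → ℝ) → (Fin n → ℝ)) (hf : Continuous f)
    (X XT : Set (Fin n → ℝ)) (hXT : XT ⊆ X) (T : ℝ) (hT : 0 < T)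
    (v : ℝ → (Fin n → ℝ) → ℝ)
    (hv : ContDiff ℝ 1 (Function.uncurry v))
    (hdecr : ∀ t ∈ Set.Icc (0 : ℝ) T, ∀ y ∈ X,
      fderiv ℝ (Function.uncurry v) (t, y) (1, f y) ≤ 0)
    (hvT : ∀ y ∈ XT, 0 ≤ v T y)
    (w : (Fin n → ℝ) → ℝ)
    (hw : ∀ y ∈ X, v 0 y + 1 ≤ w y)
    (x₀ : Fin n → ℝ)
    (hx₀ : x₀ ∈ X ∧ ∃ x : ℝ → (Fin n → ℝ),
      (∀ t ∈ Set.Icc (0 : ℝ) T, HasDerivAt x (f (x t)) t) ∧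
      x 0 = x₀ ∧ (∀ t ∈ Set.Icc (0 : ℝ) T, x t ∈ X) ∧ x T ∈ XT) :
    1 ≤ w x₀ :=
  stmt_6_general f X XT T hT v hv hdecr hvT w hw x₀ hx₀
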